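/- Let G = G₁ × ⋯ × Gₙ be a product of locally compact second countable Hausdorff groups and let Γ ≤ G be a lattice, i.e. a discrete subgroup such that the quotient G/Γ carries a G-invariant Borel probability measure. Let H be a Hausdorff topological group and τ : Γ → H a homomorphism. Suppose there exist two distinct indices i, and for each of them a continuous homomorphism τᵢ : Gᵢ → H, such that the composed homomorphism G → Gᵢ → H (the canonical projection followed by τᵢ) extends τ. Then the closure of τ(Γ) in H is compact. -/

import Mathlib

/-!
Since `τᵢ ∘ prᵢ` and `τⱼ ∘ prⱼ` both extend `τ`, the map `g ↦ τᵢ(gᵢ) τⱼ(gⱼ)⁻¹` is right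
`Γ`-invariant and descends to a continuous `f : G/Γ → H`. As `i ≠ j`, translating by the element of
`G` whose only nontrivial coordinate is `γᵢ` multiplies `f` on the left by `τ(γ)`. For a compact
`K ⊆ G/Γ` of measure `> 1/2` and `A = f(K)`, the set `f⁻¹(A)` and its translate both have measure
`> 1/2`, so they meet; hence `τ(γ) ∈ A A⁻¹`, a compact set independent of `γ`.
-/

open MeasureTheory Set Pointwise

theorem Function.Surjective.sigmaCompactSpace {X Y : Type*} [TopologicalSpace X]
    [TopologicalSpace Y] [SigmaCompactSpace X] {f : X → Y} (hsurj : Function.Surjective f)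
    (hf : Continuous f) : SigmaCompactSpace Y :=
  isSigmaCompact_univ_iff.mp (hsurj.range_eq ▸ isSigmaCompact_range hf)

theorem MeasureTheory.exists_isCompact_lt_measure {X : Type*} [TopologicalSpace X]
    [SigmaCompactSpace X] [MeasurableSpace X] (μ : Measure X) {r : ENNReal} (hr : r < μ univ) :
    ∃ K, IsCompact K ∧ r < μ K := by
  rw [← iUnion_compactCovering X, Monotone.measure_iUnion (compactCovering_subset X),
    lt_iSup_iff] at hr
  obtain ⟨n, hn⟩ := hr
  exact ⟨_, isCompact_compactCovering X n, hn⟩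

theorem mem_mul_inv_of_measure_preimage_gt_half {X H : Type*} [MeasurableSpace X] [Group H]
    (μ : Measure X) [IsProbabilityMeasure μ] (f : X → H) {A : Set H}
    (hA : MeasurableSet (f ⁻¹' A)) (hμA : 1 / 2 < μ (f ⁻¹' A)) (T : X → X)
    (hT : μ (T ⁻¹' (f ⁻¹' A)) = μ (f ⁻¹' A)) {h : H} (hfT : ∀ x, f (T x) = h * f x) :
    h ∈ A * A⁻¹ := by
  have hsum : μ univ < μ (T ⁻¹' (f ⁻¹' A)) + μ (f ⁻¹' A) := by
    rw [hT, measure_univ, ← ENNReal.add_halves 1]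
    exact ENNReal.add_lt_add hμA hμA
  obtain ⟨x, hTx, hx⟩ :=
    nonempty_inter_of_measure_lt_add μ hA (subset_univ _) (subset_univ _) hsum
  have hTx' : h * f x ∈ A := hfT x ▸ hTx
  have hmem : h * f x * (f x)⁻¹ ∈ A * A⁻¹ := mul_mem_mul hTx' (Set.inv_mem_inv.mpr hx)
  rwa [mul_inv_cancel_right] at hmem

namespace QuotientGroup

variable {G H : Type*} [Group G] [Group H] (Γ : Subgroup G) (φ ψ : G →* H)

theorem map_mul_inv_map_mul_right (hφψ : ∀ γ ∈ Γ, φ γ = ψ γ) (g : G) {γ : G} (hγ : γ ∈ Γ) :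
    φ (g * γ) * (ψ (g * γ))⁻¹ = φ g * (ψ g)⁻¹ := by
  rw [map_mul, map_mul, hφψ γ hγ]
  group

def liftMulInv (hφψ : ∀ γ ∈ Γ, φ γ = ψ γ) : G ⧸ Γ → H :=
  fun x => Quotient.liftOn' x (fun g => φ g * (ψ g)⁻¹) fun a b hab => by
    rw [leftRel_apply] at hab
    simpa using (map_mul_inv_map_mul_right Γ φ ψ hφψ a hab).symm

variable {Γ φ ψ} (hφψ : ∀ γ ∈ Γ, φ γ = ψ γ)

@[simp]
theorem liftMulInv_mk (g : G) : liftMulInv Γ φ ψ hφψ g = φ g * (ψ g)⁻¹ :=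
  rfl

theorem liftMulInv_smul {a : G} (ha : ψ a = 1) (x : G ⧸ Γ) :
    liftMulInv Γ φ ψ hφψ (a • x) = φ a * liftMulInv Γ φ ψ hφψ x := by
  induction x using QuotientGroup.induction_on with
  | H g =>
    rw [MulAction.Quotient.smul_mk, smul_eq_mul, liftMulInv_mk, liftMulInv_mk, map_mul, map_mul,
      ha, one_mul, mul_assoc]

theorem continuous_liftMulInv [TopologicalSpace G] [TopologicalSpace H] [ContinuousMul H]
    [ContinuousInv H] (hφ : Continuous φ) (hψ : Continuous ψ) :
    Continuous (liftMulInv Γ φ ψ hφψ) :=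
  Continuous.quotient_liftOn' (hφ.mul hψ.inv) _

end QuotientGroup

theorem relatively_compact_of_two_extensions_general
    {ι : Type*} [Fintype ι]
    (G : ι → Type*) [∀ i, Group (G i)] [∀ i, TopologicalSpace (G i)]
    [∀ i, LocallyCompactSpace (G i)]
    [∀ i, SecondCountableTopology (G i)]
    (Γ : Subgroup (∀ i, G i))
    (hlattice : ∃ μ : @MeasureTheory.Measure ((∀ i, G i) ⧸ Γ) (borel _),
      @MeasureTheory.IsProbabilityMeasure _ (borel _) μ ∧
      ∀ g : ∀ i, G i, ∀ s : Set ((∀ i, G i) ⧸ Γ), @MeasurableSet _ (borel _) s →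
        μ ((fun y => g • y) ⁻¹' s) = μ s)
    {H : Type*} [Group H] [TopologicalSpace H] [IsTopologicalGroup H] [T2Space H]
    (τ : Γ →* H)
    (i j : ι) (hij : i ≠ j)
    (τi : G i →* H) (τj : G j →* H)
    (hci : Continuous τi) (hcj : Continuous τj)
    (hexti : ∀ γ : Γ, τi ((γ : ∀ k, G k) i) = τ γ)
    (hextj : ∀ γ : Γ, τj ((γ : ∀ k, G k) j) = τ γ) :
    IsCompact (closure (Set.range fun γ : Γ => τ γ)) := by
  classical
  let : MeasurableSpace ((∀ k, G k) ⧸ Γ) := borel _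
  have : BorelSpace ((∀ k, G k) ⧸ Γ) := ⟨rfl⟩
  have := QuotientGroup.mk_surjective.sigmaCompactSpace (QuotientGroup.continuous_mk (N := Γ))
  obtain ⟨μ, hprob, hinv⟩ := hlattice
  let φ := τi.comp (Pi.evalMonoidHom G i)
  let ψ := τj.comp (Pi.evalMonoidHom G j)
  have hφψ : ∀ γ ∈ Γ, φ γ = ψ γ := fun γ hγ => (hexti ⟨γ, hγ⟩).trans (hextj ⟨γ, hγ⟩).symm
  set f := QuotientGroup.liftMulInv Γ φ ψ hφψ
  have hf : Continuous f :=
    QuotientGroup.continuous_liftMulInv hφψ (hci.comp (continuous_apply i))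
      (hcj.comp (continuous_apply j))
  obtain ⟨K, hK, hμK⟩ := exists_isCompact_lt_measure μ (r := 1 / 2) (by simp)
  have hA : IsCompact (f '' K) := hK.image hf
  have hAA : IsCompact (f '' K * (f '' K)⁻¹) := hA.mul hA.inv
  refine hAA.of_isClosed_subset isClosed_closure (closure_minimal ?_ hAA.isClosed)
  rintro - ⟨γ, rfl⟩
  have hmeas : MeasurableSet (f ⁻¹' (f '' K)) := (hA.isClosed.preimage hf).measurableSet
  set a : ∀ k, G k := Pi.mulSingle i ((γ : ∀ k, G k) i)
  have hφa : φ a = τ γ := by simp [a, φ, hexti]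
  have hψa : ψ a = 1 := by simp [a, ψ, Pi.mulSingle_eq_of_ne hij.symm]
  refine mem_mul_inv_of_measure_preimage_gt_half μ f hmeas
    (hμK.trans_le (measure_mono (subset_preimage_image f K))) (a • ·) (hinv a _ hmeas)
    fun x => (QuotientGroup.liftMulInv_smul hφψ hψa x).trans (congrArg (· * f x) hφa)

/-- Monod, Lemma: let `Γ` be a lattice in a product `G = G₁ × ⋯ × Gₙ` of locally compact
second countable Hausdorff groups and `τ : Γ → H` a homomorphism to a Hausdorff topological
group. If for two distinct indices `i` there are continuous homomorphisms `τᵢ : Gᵢ → H` such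
that the compositions `G ↠ Gᵢ → H` extend `τ`, then the closure of `τ(Γ)` is compact. -/
theorem relatively_compact_of_two_extensions
    {ι : Type*} [Fintype ι]
    (G : ι → Type*) [∀ i, Group (G i)] [∀ i, TopologicalSpace (G i)]
    [∀ i, IsTopologicalGroup (G i)] [∀ i, LocallyCompactSpace (G i)]
    [∀ i, SecondCountableTopology (G i)] [∀ i, T2Space (G i)]
    (Γ : Subgroup (∀ i, G i)) [DiscreteTopology Γ]
    (hlattice : ∃ μ : @MeasureTheory.Measure ((∀ i, G i) ⧸ Γ) (borel _),
      @MeasureTheory.IsProbabilityMeasure _ (borel _) μ ∧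
      ∀ g : ∀ i, G i, ∀ s : Set ((∀ i, G i) ⧸ Γ), @MeasurableSet _ (borel _) s →
        μ ((fun y => g • y) ⁻¹' s) = μ s)
    {H : Type*} [Group H] [TopologicalSpace H] [IsTopologicalGroup H] [T2Space H]
    (τ : Γ →* H)
    (i j : ι) (hij : i ≠ j)
    (τi : G i →* H) (τj : G j →* H)
    (hci : Continuous τi) (hcj : Continuous τj)
    (hexti : ∀ γ : Γ, τi ((γ : ∀ k, G k) i) = τ γ)
    (hextj : ∀ γ : Γ, τj ((γ : ∀ k, G k) j) = τ γ) :
    IsCompact (closure (Set.range fun γ : Γ => τ γ)) :=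
  relatively_compact_of_two_extensions_general G Γ hlattice τ i j hij τi τj hci hcj hexti hextj
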